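/- Let F ∈ L_1(S). Let x, y ∈ B_0 and m ∈ ℤ be such that F(x) ∈ B_m, x < y ≤ F_0(x) in the branch order of B_0, and F(y) ∉ B_m∖{m}. Assume additionally that F(0) ∉ {z ∈ B_m : x + m < z ≤ max B_m}. Then Per(F) = ℕ. -/

import Mathlib

open Set Filter Function

noncomputable section

/-- The real axis in `ℂ`. -/
def realAxis : Set ℂ := {z : ℂ | z.im = 0}

/-- The union of the branches of `S`. -/
def branches : Set ℂ := {z : ℂ | (∃ m : ℤ, z.re = (m : ℝ)) ∧ z.im ∈ Set.Icc (0 : ℝ) 1}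

/-- The universal covering `S = ℝ ∪ B` of the space `σ`. -/
def Sspace : Set ℂ := realAxis ∪ branches

/-- The branch `B_m`. -/
def branch (m : ℤ) : Set ℂ := {z : ℂ | z.re = (m : ℝ) ∧ z.im ∈ Set.Icc (0 : ℝ) 1}

/-- `F` is a continuous self-map of `S` of degree `d`, i.e. `F ∈ L_d(S)`. -/
def DegMap (d : ℤ) (F : ℂ → ℂ) : Prop :=
  Set.MapsTo F Sspace Sspace ∧ ContinuousOn F Sspace ∧
    ∀ z ∈ Sspace, F (z + 1) = F z + (d : ℂ)

/-- `z` is a periodic (mod 1) point of `F` of period `n`. -/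
def IsPeriodicMod1 (F : ℂ → ℂ) (z : ℂ) (n : ℕ) : Prop :=
  0 < n ∧ (∃ k : ℤ, F^[n] z = z + (k : ℂ)) ∧
    ∀ i : ℕ, 0 < i → i < n → ∀ k : ℤ, F^[i] z ≠ z + (k : ℂ)

/-- The set `Per(F)` of periods (mod 1) of `F`. -/
def PerSet (F : ℂ → ℂ) : Set ℕ := {n : ℕ | ∃ z ∈ Sspace, IsPeriodicMod1 F z n}

/-- `x` is a true periodic point of `G` of least period `n`. -/
def IsTruePeriodic (G : ℂ → ℂ) (x : ℂ) (n : ℕ) : Prop :=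
  0 < n ∧ G^[n] x = x ∧ ∀ i : ℕ, 0 < i → i < n → G^[i] x ≠ x

/-- The rotation number of `z` under `F` is `ρ`. -/
def HasRotNum (F : ℂ → ℂ) (z : ℂ) (ρ : ℝ) : Prop :=
  Filter.Tendsto (fun n : ℕ => ((F^[n] z).re - z.re) / (n : ℝ)) Filter.atTop (nhds ρ)

/-- `Rot_ℝ(F)`. -/
def RotR (F : ℂ → ℂ) : Set ℝ := {ρ : ℝ | ∃ x : ℝ, HasRotNum F (x : ℂ) ρ}

/-- `Rot(F)`. -/
def RotSet (F : ℂ → ℂ) : Set ℝ := {ρ : ℝ | ∃ z ∈ Sspace, HasRotNum F z ρ}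

/-- `Per(α, F)`: periods (mod 1) of points with rotation number `α`. -/
def PerRot (F : ℂ → ℂ) (α : ℝ) : Set ℕ :=
  {n : ℕ | ∃ z ∈ Sspace, IsPeriodicMod1 F z n ∧ HasRotNum F z α}

/-- The Sharkovsky ordering `a ≤_Sh b`. -/
def sharkLe (a b : ℕ) : Prop :=
  if ordCompl[2] a = 1 then
    (if ordCompl[2] b = 1 then a.factorization 2 ≤ b.factorization 2 else True)
  else
    ordCompl[2] b ≠ 1 ∧ (b.factorization 2 < a.factorization 2 ∨
      (b.factorization 2 = a.factorization 2 ∧ ordCompl[2] b ≤ ordCompl[2] a))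

/-- The initial segment `Shs(s)` of the Sharkovsky ordering. -/
def Shs (s : ℕ) : Set ℕ := {k : ℕ | 0 < k ∧ sharkLe k s}

/-- Initial segments of the Sharkovsky ordering: either `Shs(s)` for some `s ∈ ℕ`,
or the set of all powers of `2` (corresponding to the symbol `2^∞`). -/
def ShInitialSeg (E : Set ℕ) : Prop :=
  (∃ s : ℕ, 0 < s ∧ E = Shs s) ∨ E = {k : ℕ | ∃ i : ℕ, k = 2 ^ i}

/-- `M(c, d)`. -/
def Mset (c d : ℝ) : Set ℕ :=
  {n : ℕ | 0 < n ∧ ∃ k : ℤ, c < (k : ℝ) / (n : ℝ) ∧ (k : ℝ) / (n : ℝ) < d}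

/-- `Λ(ρ, E)`. -/
def Lam (ρ : ℝ) (E : Set ℕ) : Set ℕ :=
  {m : ℕ | ∃ k : ℤ, ∃ n : ℕ, 0 < n ∧ Int.gcd k (n : ℤ) = 1 ∧ ρ = (k : ℝ) / (n : ℝ) ∧
    ∃ q ∈ E, m = n * q}

/-- The lifted orbit of `z` under `F`. -/
def LOrb (F : ℂ → ℂ) (z : ℂ) : Set ℂ :=
  {w : ℂ | ∃ n : ℕ, ∃ k : ℤ, w = F^[n] z + (k : ℂ)}

/-- The convex hull of `A` in `S`: the smallest closed connected subset of `S`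
containing `A`. -/
def sHull (A : Set ℂ) : Set ℂ :=
  ⋂₀ {C : Set ℂ | A ⊆ C ∧ C ⊆ Sspace ∧ IsClosed C ∧ IsConnected C}

/-- Compact nondegenerate intervals of `S`. -/
def IsCNInterval (I : Set ℂ) : Prop :=
  ∃ a b : ℂ, a ∈ Sspace ∧ b ∈ Sspace ∧ a ≠ b ∧ I = sHull {a, b}

/-- `I` `G`-covers `J`: there is a subinterval `I' ⊆ I` with `G(I') = J`. -/
def Covers (G : ℂ → ℂ) (I J : Set ℂ) : Prop :=
  ∃ a b : ℂ, a ∈ I ∧ b ∈ I ∧ sHull {a, b} ⊆ I ∧ G '' sHull {a, b} = J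

/-- The interior of `K` relative to the subspace `S`. -/
def relInterior (K : Set ℂ) : Set ℂ := {z ∈ Sspace | K ∈ nhdsWithin z Sspace}

/-- The map `F_0 : S → B_0`, `F_0(z) = F(z) − Re(F(z))`. -/
def Fzero (F : ℂ → ℂ) (z : ℂ) : ℂ := F z - ((F z).re : ℂ)

/-- The set `A + ℤ` of integer translates of `A`. -/
def trZ (A : Set ℂ) : Set ℂ := {w : ℂ | ∃ z ∈ A, ∃ k : ℤ, w = z + (k : ℂ)}

/-- `(I, <_I)` positively `G`-covers `(J, <_J)`, where `I` is the oriented interval with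
endpoints `a = min I`, `b = max I`, and `J` the oriented interval with endpoints
`c = min J`, `d = max J`; the order along `I` is: `x ≤_I y` iff `x ∈ ⟨{a, y}⟩`. -/
def PosCovers (G : ℂ → ℂ) (a b c d : ℂ) : Prop :=
  ∃ x y : ℂ, x ∈ sHull {a, b} ∧ y ∈ sHull {a, b} ∧ x ∈ sHull {a, y} ∧ G x = c ∧ G y = d

/-- `(I, <_I)` negatively `G`-covers `(J, <_J)`. -/
def NegCovers (G : ℂ → ℂ) (a b c d : ℂ) : Prop := PosCovers G a b d c

/-- A concrete 3-star `X₃ ⊆ ℂ` with branching point `0`: the union of the three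
segments `[-1,0]`, `[0,1]` and `[0,i]`. -/
def star3 : Set ℂ :=
  {z : ℂ | z.im = 0 ∧ z.re ∈ Set.Icc (-1 : ℝ) 1} ∪
    {z : ℂ | z.re = 0 ∧ z.im ∈ Set.Icc (0 : ℝ) 1}

/-- `TPer(f)`: the set of least periods of the periodic points of `f` in `X`. -/
def TPer (f : ℂ → ℂ) (X : Set ℂ) : Set ℕ :=
  {n : ℕ | ∃ x ∈ X, IsTruePeriodic f x n}

open Classical in
/-- The taxicab distance on `S`. -/
def sDist (x y : ℂ) : ℝ :=
  if (∃ m : ℤ, x.re = (m : ℝ) ∧ y.re = (m : ℝ)) ∧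
      x.im ∈ Set.Icc (0 : ℝ) 1 ∧ y.im ∈ Set.Icc (0 : ℝ) 1 then
    |x.im - y.im|
  else |x.im| + |x.re - y.re| + |y.im|


/-!
Measure heights relative to the branch `B_m`: `ψ t = Im F(t i) - |Re F(t i) - m|` is continuous
on `[0, 1]`, and on the closure of `{ψ > 0}` the map `F` sends `t i` to `m + ψ(t) i`. Since `F`
has degree one, a `ψ`-orbit in that closure lifts to an `F`-orbit advancing by `m` at each step,
so least periods of `ψ` are periods (mod 1) of `F`. For `a = Im x < b = Im y` the hypotheses
give `ψ a ≥ b`, `ψ b ≤ 0` and `ψ 0 ≤ a`; hence `ψ` has a fixed point in `[a, b]`. Choose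
`w ∈ (a, b)` with `ψ w = a` and let `s₀` be the first point after `w` with `ψ ≤ 0`. Then
`P = [0, a]`, `Q = [a, w]`, `R = [w, s₀]` satisfy `ψ(P) ⊇ Q ∪ R`, `ψ(Q) ⊇ Q ∪ R` and
`ψ(R) ⊇ P`, and following the loop `P Q ⋯ Q R P` of length `n ≥ 2` gives a point of least
period `n`. The only point of this orbit where `ψ` may vanish lies in `R = closure [w, s₀)`.
-/

lemma mem_uIcc_or_mem_uIcc_of_notMem_uIcc {α : Type*} [LinearOrder α] {x c d : α}
    (h : x ∉ uIcc c d) : c ∈ uIcc x d ∨ d ∈ uIcc c x := by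
  simp only [mem_uIcc] at *
  grind

section IntervalCovers

variable {f : ℝ → ℝ}

lemma exists_image_uIcc_eq_of_le {u₀ v₀ : ℝ} (huv : u₀ ≤ v₀) (hf : ContinuousOn f (Icc u₀ v₀)) :
    ∃ u ∈ Icc u₀ v₀, ∃ v ∈ Icc u₀ v₀, f '' uIcc u v = uIcc (f u₀) (f v₀) := by
  obtain ⟨v, ⟨hv, hfv⟩, hv_min⟩ : ∃ v, IsLeast {t ∈ Icc u₀ v₀ | f t = f v₀} v :=
    (isCompact_Icc.of_isClosed_subset (isClosed_Icc.isClosed_eq hf continuousOn_const)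
      (sep_subset _ _)).exists_isLeast ⟨v₀, right_mem_Icc.2 huv, rfl⟩
  have hf' : ContinuousOn f (Icc u₀ v) := hf.mono (Icc_subset_Icc_right hv.2)
  obtain ⟨u, ⟨hu, hfu⟩, hu_max⟩ : ∃ u, IsGreatest {t ∈ Icc u₀ v | f t = f u₀} u :=
    (isCompact_Icc.of_isClosed_subset (isClosed_Icc.isClosed_eq hf' continuousOn_const)
      (sep_subset _ _)).exists_isGreatest ⟨u₀, left_mem_Icc.2 hv.1, rfl⟩
  -- between the last preimage `u` of `f u₀` and the first preimage `v` of `f v₀`, the value of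
  -- `f` cannot leave `uIcc (f u₀) (f v₀)` without producing an earlier or later preimage
  have hmaps : MapsTo f (Icc u v) (uIcc (f u₀) (f v₀)) := by
    intro t ht
    by_contra hout
    rcases mem_uIcc_or_mem_uIcc_of_notMem_uIcc hout with hc | hd
    · obtain ⟨s, hs, hfs⟩ := intermediate_value_uIcc
        (hf'.mono (uIcc_subset_Icc ⟨hu.1.trans ht.1, ht.2⟩ ⟨hv.1, le_rfl⟩)) (hfv.symm ▸ hc)
      rw [uIcc_of_le ht.2] at hs
      have hsu : s ≤ u := hu_max ⟨⟨hu.1.trans (ht.1.trans hs.1), hs.2⟩, hfs⟩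
      exact hout (le_antisymm (hs.1) (hsu.trans ht.1) ▸ hfs ▸ left_mem_uIcc)
    · obtain ⟨s, hs, hfs⟩ := intermediate_value_uIcc
        (hf'.mono (uIcc_subset_Icc ⟨hu.1, hu.2⟩ ⟨hu.1.trans ht.1, ht.2⟩)) (hfu.symm ▸ hd)
      rw [uIcc_of_le ht.1] at hs
      have hvs : v ≤ s := hv_min ⟨⟨hu.1.trans hs.1, hs.2.trans (ht.2.trans hv.2)⟩, hfs⟩
      exact hout (le_antisymm hs.2 (ht.2.trans hvs) ▸ hfs ▸ right_mem_uIcc)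
  refine ⟨u, ⟨hu.1, hu.2.trans hv.2⟩, v, hv, Subset.antisymm ?_ ?_⟩
  · rw [uIcc_of_le hu.2]
    exact image_subset_iff.2 hmaps
  · have := intermediate_value_uIcc (hf'.mono (uIcc_subset_Icc hu ⟨hv.1, le_rfl⟩))
    rwa [hfu, hfv] at this

lemma ContinuousOn.exists_image_uIcc_eq {s : Set ℝ} (hs : s.OrdConnected)
    (hf : ContinuousOn f s) {c d : ℝ} (hc : c ∈ f '' s) (hd : d ∈ f '' s) :
    ∃ u ∈ s, ∃ v ∈ s, f '' uIcc u v = uIcc c d := by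
  obtain ⟨u₀, hu₀, rfl⟩ := hc
  obtain ⟨v₀, hv₀, rfl⟩ := hd
  rcases le_total u₀ v₀ with h | h
  · obtain ⟨u, hu, v, hv, himage⟩ := exists_image_uIcc_eq_of_le h (hf.mono (hs.out hu₀ hv₀))
    exact ⟨u, hs.out hu₀ hv₀ hu, v, hs.out hu₀ hv₀ hv, himage⟩
  · obtain ⟨u, hu, v, hv, himage⟩ := exists_image_uIcc_eq_of_le h (hf.mono (hs.out hv₀ hu₀))
    exact ⟨u, hs.out hv₀ hu₀ hu, v, hs.out hv₀ hu₀ hv, uIcc_comm (f u₀) _ ▸ himage⟩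

lemma ContinuousOn.iterate_of_forall_iterate_mem {X : Type*} [TopologicalSpace X] {g : X → X}
    {I : ℕ → Set X} {s : Set X} {k : ℕ} (hg : ∀ j < k, ContinuousOn g (I j))
    (hs : ∀ x ∈ s, ∀ j < k, g^[j] x ∈ I j) : ContinuousOn g^[k] s := by
  induction k with
  | zero => exact continuousOn_id
  | succ k ih =>
    rw [iterate_succ']
    exact (hg k k.lt_succ_self).comp (ih (fun j hj => hg j (by omega))
      (fun x hx j hj => hs x hx j (by omega))) (fun x hx => hs x hx k k.lt_succ_self)

theorem exists_iterate_eq_self_of_covers {n : ℕ} {I : ℕ → Set ℝ}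
    (hI : ∀ j ≤ n, ∃ p q, I j = uIcc p q) (hf : ∀ j < n, ContinuousOn f (I j))
    (hcov : ∀ j < n, I (j + 1) ⊆ f '' I j) (hloop : I n = I 0) :
    ∃ x, f^[n] x = x ∧ ∀ j ≤ n, f^[j] x ∈ I j := by
  have hpull : ∀ k ≤ n, ∃ u v, uIcc u v ⊆ I 0 ∧ f^[k] '' uIcc u v = I k ∧
      ∀ x ∈ uIcc u v, ∀ j ≤ k, f^[j] x ∈ I j := by
    intro k hk
    induction k with
    | zero =>
      obtain ⟨p, q, hpq⟩ := hI 0 hk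
      exact ⟨p, q, hpq.ge, by simp [hpq], fun x hx j hj => by
        obtain rfl : j = 0 := by omega
        exact hpq ▸ hx⟩
    | succ k ih =>
      obtain ⟨u, v, hsub, himage, hitin⟩ := ih (by omega)
      obtain ⟨c, d, hcd⟩ := hI (k + 1) hk
      have hcont : ContinuousOn f^[k + 1] (uIcc u v) :=
        ContinuousOn.iterate_of_forall_iterate_mem (fun j hj => hf j (by omega))
          (fun x hx j hj => hitin x hx j (by omega))
      have hcover : I (k + 1) ⊆ f^[k + 1] '' uIcc u v := by
        rw [iterate_succ', image_comp, himage]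
        exact hcov k (by omega)
      obtain ⟨u', hu', v', hv', himage'⟩ := hcont.exists_image_uIcc_eq ordConnected_uIcc
        (hcover (hcd ▸ left_mem_uIcc)) (hcover (hcd ▸ right_mem_uIcc))
      have hsub' : uIcc u' v' ⊆ uIcc u v := ordConnected_uIcc.uIcc_subset hu' hv'
      refine ⟨u', v', hsub'.trans hsub, himage'.trans hcd.symm, fun x hx j hj => ?_⟩
      rcases Nat.lt_succ_iff_lt_or_eq.1 (Nat.lt_succ_of_le hj) with hj | rfl
      · exact hitin x (hsub' hx) j (by omega)
      · rw [hcd, ← himage']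
        exact mem_image_of_mem _ hx
  obtain ⟨u, v, hsub, himage, hitin⟩ := hpull n le_rfl
  obtain ⟨p, q, hpq⟩ := hI 0 (Nat.zero_le n)
  rw [hloop, hpq] at himage
  rw [hpq] at hsub
  obtain ⟨x₁, hx₁, hfx₁⟩ : p ⊓ q ∈ f^[n] '' uIcc u v := himage ▸ ⟨le_rfl, inf_le_sup⟩
  obtain ⟨x₂, hx₂, hfx₂⟩ : p ⊔ q ∈ f^[n] '' uIcc u v := himage ▸ ⟨inf_le_sup, le_rfl⟩
  obtain ⟨x, hx, hfix⟩ := exists_mem_uIcc_isFixedPt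
    ((ContinuousOn.iterate_of_forall_iterate_mem hf (fun x hx j hj => hitin x hx j hj.le)).mono
      (ordConnected_uIcc.uIcc_subset hx₂ hx₁))
    (hfx₂ ▸ (hsub hx₂).2) (hfx₁ ▸ (hsub hx₁).1)
  exact ⟨x, hfix, hitin x (ordConnected_uIcc.uIcc_subset hx₂ hx₁ hx)⟩

theorem exists_iterate_eq_self_of_covers_three {P Q R : Set ℝ}
    (hP : ∃ p q, P = uIcc p q) (hQ : ∃ p q, Q = uIcc p q) (hR : ∃ p q, R = uIcc p q)
    (hfP : ContinuousOn f P) (hfQ : ContinuousOn f Q) (hfR : ContinuousOn f R)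
    (hPQR : Q ∪ R ⊆ f '' P) (hQQR : Q ∪ R ⊆ f '' Q) (hRP : P ⊆ f '' R) {n : ℕ} (hn : 2 ≤ n) :
    ∃ x ∈ P, f^[n] x = x ∧ (∀ j, 0 < j → j + 1 < n → f^[j] x ∈ Q) ∧ f^[n - 1] x ∈ R := by
  classical
  let I : ℕ → Set ℝ := fun j => if j = 0 ∨ j = n then P else if j + 1 = n then R else Q
  have hI0 : I 0 = P := if_pos (Or.inl rfl)
  have hIn : I n = P := if_pos (Or.inr rfl)
  have hIR : I (n - 1) = R := by simp only [I]; rw [if_neg (by omega), if_pos (by omega)]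
  have hIQ : ∀ j, 0 < j → j + 1 < n → I j = Q := fun j h₁ h₂ => by
    simp only [I]; rw [if_neg (by omega), if_neg (by omega)]
  have hcov : ∀ j < n, I (j + 1) ⊆ f '' I j := by
    intro j hj
    rcases (by omega : j + 1 = n ∨ j + 1 < n) with h | h
    · rw [h, hIn, show j = n - 1 by omega, hIR]
      exact hRP
    · have hnext : I (j + 1) ⊆ Q ∪ R := by
        rcases (by omega : j + 2 < n ∨ j + 2 = n) with h' | h'
        · rw [hIQ (j + 1) (by omega) h']
          exact subset_union_left
        · rw [show j + 1 = n - 1 by omega, hIR]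
          exact subset_union_right
      rcases Nat.eq_zero_or_pos j with rfl | hj₀
      · exact hI0 ▸ hnext.trans hPQR
      · exact hIQ j hj₀ h ▸ hnext.trans hQQR
  obtain ⟨x, hx, hitin⟩ := exists_iterate_eq_self_of_covers (I := I)
    (fun j _ => by simp only [I]; split_ifs <;> assumption)
    (fun j _ => by simp only [I]; split_ifs <;> assumption) hcov (hIn.trans hI0.symm)
  exact ⟨x, hI0 ▸ hitin 0 (Nat.zero_le n), hx, fun j h₁ h₂ => hIQ j h₁ h₂ ▸ hitin j (by omega),
    hIR ▸ hitin (n - 1) (by omega)⟩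

lemma ContinuousOn.exists_nonpos_of_pos_on_Ico {p q : ℝ} (hpq : p ≤ q)
    (hf : ContinuousOn f (Icc p q)) (hp : 0 < f p) (hq : f q ≤ 0) :
    ∃ s ∈ Ioc p q, f s ≤ 0 ∧ ∀ t ∈ Ico p s, 0 < f t := by
  obtain ⟨s, ⟨hs, hfs⟩, hs_min⟩ : ∃ s, IsLeast {t ∈ Icc p q | f t ≤ 0} s :=
    (isCompact_Icc.of_isClosed_subset (isClosed_Icc.isClosed_le hf continuousOn_const)
      (sep_subset _ _)).exists_isLeast ⟨q, right_mem_Icc.2 hpq, hq⟩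
  refine ⟨s, ⟨hs.1.lt_of_ne (by rintro rfl; linarith), hs.2⟩, hfs, fun t ht => ?_⟩
  by_contra! hft
  exact (hs_min ⟨⟨ht.1, ht.2.le.trans hs.2⟩, hft⟩).not_gt ht.2

theorem exists_periodic_orbit_of_height_of_two_le {ψ : ℝ → ℝ} {a b w s₀ : ℝ}
    (hψ : ContinuousOn ψ (Icc 0 1)) (ha : 0 < a) (haw : a < w) (hws : w < s₀) (hsb : s₀ ≤ b)
    (hb : b ≤ 1) (hψa : b ≤ ψ a) (hψ0 : ψ 0 ≤ a) (hψw : ψ w = a) (hψs₀ : ψ s₀ ≤ 0)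
    (hψ_pos : ∀ t ∈ Ico w s₀, 0 < ψ t) {n : ℕ} (hn : 2 ≤ n) :
    ∃ t, ψ^[n] t = t ∧ (∀ i, 0 < i → i < n → ψ^[i] t ≠ t) ∧
      ∀ j < n, ψ^[j] t ∈ closure {s ∈ Icc 0 1 | 0 < ψ s} := by
  have hab : Icc a b ⊆ Icc 0 1 := Icc_subset_Icc ha.le hb
  have hP : Icc 0 a ⊆ Icc 0 1 := Icc_subset_Icc le_rfl (by linarith)
  have hQ : Icc a w ⊆ Icc a b := Icc_subset_Icc le_rfl (hws.le.trans hsb)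
  have hR : Icc w s₀ ⊆ Icc a b := Icc_subset_Icc haw.le hsb
  have hR_closure : Icc w s₀ ⊆ closure {s ∈ Icc 0 1 | 0 < ψ s} := by
    rw [← closure_Ico hws.ne]
    exact closure_mono fun t ht => ⟨hab (hR (Ico_subset_Icc_self ht)), hψ_pos t ht⟩
  obtain ⟨x, hx, hfix, hxQ, hxR⟩ := exists_iterate_eq_self_of_covers_three
    ⟨0, a, (uIcc_of_le ha.le).symm⟩ ⟨a, w, (uIcc_of_le haw.le).symm⟩
    ⟨w, s₀, (uIcc_of_le hws.le).symm⟩ (hψ.mono hP) (hψ.mono (hQ.trans hab))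
    (hψ.mono (hR.trans hab))
    ((union_subset hQ hR).trans ((Icc_subset_Icc hψ0 hψa).trans
      (intermediate_value_Icc ha.le (hψ.mono hP))))
    ((union_subset hQ hR).trans ((Icc_subset_Icc hψw.le hψa).trans
      (intermediate_value_Icc' haw.le (hψ.mono (hQ.trans hab)))))
    ((Icc_subset_Icc hψs₀ hψw.ge).trans
      (intermediate_value_Icc' hws.le (hψ.mono (hR.trans hab))))
    hn
  have hnext : ∀ j, j + 1 < n → ψ^[j + 1] x ∈ Icc a b := fun j hj => by
    rcases (by omega : j + 2 < n ∨ j + 2 = n) with h | h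
    · exact hQ (hxQ (j + 1) (by omega) h)
    · exact hR (show j + 1 = n - 1 by omega ▸ hxR)
  refine ⟨x, hfix, fun i h₁ h₂ hi => ?_, fun j hj => ?_⟩
  · rcases (by omega : i + 1 < n ∨ i = n - 1) with h | rfl
    · have hxa : x = a := le_antisymm hx.2 (hi ▸ (hxQ i h₁ h).1)
      have := (hxQ 1 one_pos (by omega)).2
      rw [iterate_one, hxa] at this
      linarith
    · linarith [hi ▸ hxR.1, hx.2]
  · rcases (by omega : j + 1 < n ∨ j = n - 1) with h | rfl
    · refine subset_closure ⟨?_, ?_⟩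
      · rcases Nat.eq_zero_or_pos j with rfl | hj₀
        · exact hP hx
        · exact hab (hQ (hxQ j hj₀ h))
      · have := (hnext j h).1
        rw [iterate_succ_apply'] at this
        linarith
    · exact hR_closure hxR

theorem exists_periodic_orbit_of_height {ψ : ℝ → ℝ} {a b : ℝ} (hψ : ContinuousOn ψ (Icc 0 1))
    (ha : 0 ≤ a) (hab : a < b) (hb : b ≤ 1) (hψa : b ≤ ψ a) (hψb : ψ b ≤ 0) (hψ0 : ψ 0 ≤ a)
    {n : ℕ} (hn : 0 < n) :
    ∃ t, ψ^[n] t = t ∧ (∀ i, 0 < i → i < n → ψ^[i] t ≠ t) ∧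
      ∀ j < n, ψ^[j] t ∈ closure {s ∈ Icc 0 1 | 0 < ψ s} := by
  have ha₀ : 0 < a := ha.lt_of_ne (by rintro rfl; linarith)
  have hab₀₁ : Icc a b ⊆ Icc 0 1 := Icc_subset_Icc ha hb
  rcases (by omega : n = 1 ∨ 2 ≤ n) with rfl | hn
  · obtain ⟨t, ht, hfix⟩ :=
      exists_mem_Icc_isFixedPt (hψ.mono hab₀₁) hab.le (by linarith) (by linarith)
    refine ⟨t, hfix, fun i h₁ h₂ => by omega, fun j hj => ?_⟩
    obtain rfl : j = 0 := by omega
    refine subset_closure ⟨hab₀₁ ht, ?_⟩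
    rw [iterate_zero_apply, hfix.eq]
    exact ha₀.trans_le ht.1
  obtain ⟨w, hw, hψw⟩ : a ∈ ψ '' Icc a b :=
    intermediate_value_Icc' hab.le (hψ.mono hab₀₁) ⟨by linarith, by linarith⟩
  have haw : a < w := hw.1.lt_of_ne (by rintro rfl; linarith)
  obtain ⟨s₀, hs₀, hψs₀, hψ_pos⟩ :=
    (hψ.mono (Icc_subset_Icc (ha.trans hw.1) hb)).exists_nonpos_of_pos_on_Ico hw.2
      (hψw.symm ▸ ha₀) hψb
  exact exists_periodic_orbit_of_height_of_two_le hψ ha₀ haw hs₀.1 hs₀.2 hb hψa hψ0 hψw hψs₀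
    hψ_pos hn

end IntervalCovers

open Complex

lemma Sspace_add_int {z : ℂ} (hz : z ∈ Sspace) (k : ℤ) : z + k ∈ Sspace := by
  rcases hz with hz | ⟨⟨m, hm⟩, him⟩
  · exact Or.inl (by simpa [realAxis] using hz)
  · exact Or.inr ⟨⟨m + k, by simp [hm]⟩, by simpa using him⟩

lemma ofReal_mul_I_mem_Sspace {t : ℝ} (ht : t ∈ Icc (0 : ℝ) 1) : (t : ℂ) * I ∈ Sspace :=
  Or.inr ⟨⟨0, by simp⟩, by simpa using ht⟩

lemma DegMap.map_add_int {d : ℤ} {F : ℂ → ℂ} (hF : DegMap d F) {z : ℂ} (hz : z ∈ Sspace)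
    (k : ℤ) : F (z + k) = F z + d * k := by
  induction k using Int.induction_on with
  | zero => simp
  | succ k ih =>
    have := hF.2.2 _ (Sspace_add_int hz k)
    push_cast at this ih ⊢
    rw [← add_assoc, this, ih]
    ring
  | pred k ih =>
    have := hF.2.2 _ (Sspace_add_int hz (-k - 1))
    push_cast at this ih ⊢
    rw [show z + (-k - 1) + 1 = z + -k by ring, ih] at this
    linear_combination -this

/-- On `S`, `branchHeight m` is positive exactly on `B_m ∖ {m}`, where it is the height. -/
def branchHeight (m : ℤ) (z : ℂ) : ℝ := z.im - |z.re - m|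

lemma branchHeight_of_mem_branch {m : ℤ} {z : ℂ} (hz : z ∈ branch m) :
    branchHeight m z = z.im := by
  simp [branchHeight, hz.1]

lemma mem_branch_of_branchHeight_pos {m : ℤ} {z : ℂ} (hz : z ∈ Sspace)
    (h : 0 < branchHeight m z) : z ∈ branch m := by
  rcases hz with hz | ⟨⟨k, hk⟩, him⟩
  · have : z.im = 0 := hz
    linarith [abs_nonneg (z.re - m), show branchHeight m z = z.im - |z.re - m| from rfl]
  · have hlt : |((k - m : ℤ) : ℝ)| < 1 := by
      push_cast
      linarith [him.2, show branchHeight m z = z.im - |(k : ℝ) - m| by rw [← hk]; rfl]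
    have hkm : |k - m| < 1 := by exact_mod_cast hlt
    obtain rfl : k = m := by rw [abs_lt] at hkm; omega
    exact ⟨hk, him⟩

lemma mem_Icc_of_mem_closure_sep {p : ℝ → Prop} {t : ℝ}
    (ht : t ∈ closure {s ∈ Icc (0 : ℝ) 1 | p s}) : t ∈ Icc (0 : ℝ) 1 :=
  closure_minimal (sep_subset _ _) isClosed_Icc ht

def heightMap (F : ℂ → ℂ) (m : ℤ) (t : ℝ) : ℝ := branchHeight m (F (t * I))

section HeightMap

variable {F : ℂ → ℂ} {m : ℤ}

lemma continuousOn_heightMap (hF : ContinuousOn F Sspace) :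
    ContinuousOn (heightMap F m) (Icc 0 1) :=
  (continuous_im.sub (continuous_abs.comp (continuous_re.sub continuous_const))).comp_continuousOn
    (hF.comp (by fun_prop) fun _ ht => ofReal_mul_I_mem_Sspace ht)

lemma map_ofReal_mul_I_of_mem_closure (hmaps : MapsTo F Sspace Sspace)
    (hF : ContinuousOn F Sspace) {t : ℝ}
    (ht : t ∈ closure {s ∈ Icc (0 : ℝ) 1 | 0 < heightMap F m s}) :
    F (t * I) = m + heightMap F m t * I := by
  have hclosed : IsClosed {s ∈ Icc (0 : ℝ) 1 | F (s * I) = m + heightMap F m s * I} :=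
    isClosed_Icc.isClosed_eq (hF.comp (by fun_prop) fun _ hs => ofReal_mul_I_mem_Sspace hs)
      (continuousOn_const.add ((continuous_ofReal.comp_continuousOn
        (continuousOn_heightMap hF)).mul continuousOn_const))
  refine (hclosed.closure_subset_iff.2 ?_ ht).2
  rintro s ⟨hs, hpos⟩
  refine ⟨hs, ?_⟩
  have hmem := mem_branch_of_branchHeight_pos (hmaps (ofReal_mul_I_mem_Sspace hs)) hpos
  rw [heightMap, branchHeight_of_mem_branch hmem]
  apply Complex.ext <;> simp [hmem.1]

lemma iterate_ofReal_mul_I (hF : DegMap 1 F) {t : ℝ} {n : ℕ}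
    (horb : ∀ j < n, (heightMap F m)^[j] t ∈ closure {s ∈ Icc (0 : ℝ) 1 | 0 < heightMap F m s}) :
    ∀ j ≤ n, F^[j] (t * I) = ((j * m : ℤ) : ℂ) + (heightMap F m)^[j] t * I := by
  intro j hj
  induction j with
  | zero => simp
  | succ j ih =>
    have hj' := horb j (by omega)
    rw [iterate_succ_apply', ih (by omega), iterate_succ_apply', add_comm,
      hF.map_add_int (ofReal_mul_I_mem_Sspace (mem_Icc_of_mem_closure_sep hj')),
      map_ofReal_mul_I_of_mem_closure hF.1 hF.2.1 hj']
    push_cast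
    ring

lemma mem_PerSet_of_heightMap_periodic (hF : DegMap 1 F) {t : ℝ} {n : ℕ} (hn : 0 < n)
    (hfix : (heightMap F m)^[n] t = t) (hmin : ∀ i, 0 < i → i < n → (heightMap F m)^[i] t ≠ t)
    (horb : ∀ j < n, (heightMap F m)^[j] t ∈ closure {s ∈ Icc (0 : ℝ) 1 | 0 < heightMap F m s}) :
    n ∈ PerSet F := by
  have hiter := iterate_ofReal_mul_I hF horb
  refine ⟨t * I, ofReal_mul_I_mem_Sspace (mem_Icc_of_mem_closure_sep (horb 0 hn)), hn,
    ⟨n * m, ?_⟩, fun i h₁ h₂ k hk => hmin i h₁ h₂ ?_⟩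
  · rw [hiter n le_rfl, hfix]
    ring
  · simpa using congrArg im ((hiter i h₂.le).symm.trans hk)

end HeightMap

/-- Let `F ∈ L₁(S)`, `x, y ∈ B₀`, `m ∈ ℤ` with `F(x) ∈ B_m`,
`x < y ≤ F₀(x)` in the branch order, `F(y) ∉ B_m ∖ {m}` and
`F(0) ∉ (x+m, max B_m]`. Then `Per(F) = ℕ`. -/
theorem statement16 (F : ℂ → ℂ) (hF : DegMap 1 F) (x y : ℂ) (m : ℤ)
    (hx : x ∈ branch 0) (hy : y ∈ branch 0)
    (hFx : F x ∈ branch m)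
    (hxy : x.im < y.im) (hyF : y.im ≤ (Fzero F x).im)
    (hFy : F y ∉ branch m \ {(m : ℂ)})
    (hF0 : F 0 ∉ {z ∈ branch m | x.im < z.im}) :
    PerSet F = {n : ℕ | 0 < n} := by
  have hxI : (x.im : ℂ) * I = x := Complex.ext (by simp [hx.1]) (by simp)
  have hyI : (y.im : ℂ) * I = y := Complex.ext (by simp [hy.1]) (by simp)
  have hψa : y.im ≤ heightMap F m x.im := by
    rw [heightMap, hxI, branchHeight_of_mem_branch hFx]
    simpa [Fzero] using hyF
  have hψb : heightMap F m y.im ≤ 0 := by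
    by_contra! h
    rw [heightMap, hyI] at h
    have hmem := mem_branch_of_branchHeight_pos (hF.1 (hyI ▸ ofReal_mul_I_mem_Sspace hy.2)) h
    refine hFy ⟨hmem, fun heq => ?_⟩
    rw [mem_singleton_iff.1 heq, branchHeight] at h
    simp at h
  have hψ0 : heightMap F m 0 ≤ x.im := by
    by_contra! h
    rw [heightMap, ofReal_zero, zero_mul] at h
    have h0 : (0 : ℂ) ∈ Sspace := by simpa using ofReal_mul_I_mem_Sspace (t := 0) (by simp)
    have hmem := mem_branch_of_branchHeight_pos (hF.1 h0) (hx.2.1.trans_lt h)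
    exact hF0 ⟨hmem, by rwa [branchHeight_of_mem_branch hmem] at h⟩
  ext n
  refine ⟨fun ⟨_, _, hz⟩ => hz.1, fun hn => ?_⟩
  obtain ⟨t, hfix, hmin, horb⟩ := exists_periodic_orbit_of_height
    (continuousOn_heightMap hF.2.1) hx.2.1 hxy hy.2.2 hψa hψb hψ0 hn
  exact mem_PerSet_of_heightMap_periodic hF hn hfix hmin horb

end
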